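/- Let p : ℤ → ℝ satisfy (H1) and (H2), and let v_1 ≠ v_2 be real numbers. Then the reduced graph G̃(v_1,v_2) contains a two-colored two-way infinite path (respectively, a two-colored cycle) if and only if the graph G(v_1,v_2) contains a two-colored two-way infinite path (respectively, a two-colored cycle). -/

import Mathlib

open MeasureTheory Real Complex
open scoped ENNReal

/-- λ_k(v) = p(k) - k v -/
noncomputable def lamk (p : ℤ → ℝ) (v : ℝ) (k : ℤ) : ℝ := p k - k * v

/-- Ξ_k(v) = {m : λ_m(v) = λ_k(v)} -/
def XiSet (p : ℤ → ℝ) (v : ℝ) (k : ℤ) : Set ℤ := {m | lamk p v m = lamk p v k}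

/-- Π(v) = {k : ∃ m ≠ k, λ_k(v) = λ_m(v)} -/
def PiV (p : ℤ → ℝ) (v : ℝ) : Set ℤ := {k | ∃ m : ℤ, m ≠ k ∧ lamk p v k = lamk p v m}

/-- Λ(v) = {λ_k(v) : k ∈ ℤ} -/
def LamV (p : ℤ → ℝ) (v : ℝ) : Set ℝ := Set.range (lamk p v)

/-- γ'(v) = sup over finite W ⊆ Λ(v) of the separation gap of Λ(v) \ W, valued in ℝ≥0∞. -/
noncomputable def gammaP (p : ℤ → ℝ) (v : ℝ) : ℝ≥0∞ :=
  ⨆ (W : Finset ℝ) (_ : ↑W ⊆ LamV p v),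
    ⨅ (a : ℝ) (_ : a ∈ LamV p v \ ↑W) (b : ℝ) (_ : b ∈ LamV p v \ ↑W) (_ : a ≠ b),
      ENNReal.ofReal |a - b|

/-- The solution u(t,x) = ∑_k c_k e^{i(p(k)t + kx)} of ∂_t u = iP(D)u. -/
noncomputable def solD (p : ℤ → ℝ) (c : ℤ → ℂ) (t x : ℝ) : ℂ :=
  ∑' k : ℤ, c k * Complex.exp (Complex.I * ((p k : ℂ) * (t : ℂ) + (k : ℂ) * (x : ℂ)))

/-- Hypothesis (H1): n_k(v) < ∞ for all k, v. -/
def hypH1 (p : ℤ → ℝ) : Prop := ∀ (v : ℝ) (k : ℤ), (XiSet p v k).Finite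

/-- Hypothesis (H2): for each v there is N with n_k(v) ≤ 2 for all k ≥ N. -/
def hypH2 (p : ℤ → ℝ) : Prop :=
  ∀ v : ℝ, ∃ N : ℕ, ∀ k : ℤ, (N : ℤ) ≤ k → (XiSet p v k).ncard ≤ 2

/-- Colored edges of the graph G(v₁,v₂): `true` = red (λ(v₁) agree), `false` = blue. -/
def cedge (p : ℤ → ℝ) (v1 v2 : ℝ) (b : Bool) (k1 k2 : ℤ) : Prop :=
  k1 ≠ k2 ∧ lamk p (if b then v1 else v2) k1 = lamk p (if b then v1 else v2) k2

/-- There is a two-colored cycle of G(v₁,v₂) all of whose vertices lie in S. -/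
def TwoColCycleIn (p : ℤ → ℝ) (v1 v2 : ℝ) (S : Set ℤ) : Prop :=
  ∃ (n : ℕ) (f : ZMod (n + 3) → ℤ) (col : ZMod (n + 3) → Bool),
    Function.Injective f ∧ (∀ i, f i ∈ S) ∧
    (∀ i, cedge p v1 v2 (col i) (f i) (f (i + 1))) ∧
    ∃ i j, col i ≠ col j

/-- Adjacency in G(v₁,v₂) (edge of either color). -/
def gadj (p : ℤ → ℝ) (v1 v2 : ℝ) (k1 k2 : ℤ) : Prop := ∃ b, cedge p v1 v2 b k1 k2

/-- g(v₁,v₂) < ∞ : a uniform finite bound on the sizes of connected components. -/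
def gFinite (p : ℤ → ℝ) (v1 v2 : ℝ) : Prop :=
  ∃ N : ℕ, ∀ k ∈ PiV p v1 ∪ PiV p v2,
    {m | Relation.ReflTransGen (gadj p v1 v2) k m}.Finite ∧
    {m | Relation.ReflTransGen (gadj p v1 v2) k m}.ncard ≤ N

/-- k' is connected to k in color b (`true` = red, `false` = blue): k' = k, or there is
a finite path from k' to k whose last edge has color b. -/
def ConnTo (p : ℤ → ℝ) (v1 v2 : ℝ) (b : Bool) (k' k : ℤ) : Prop :=
  k' = k ∨ ∃ (n : ℕ) (f : Fin (n + 2) → ℤ) (col : Fin (n + 1) → Bool),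
    Function.Injective f ∧
    (∀ i : Fin (n + 1), cedge p v1 v2 (col i) (f i.castSucc) (f i.succ)) ∧
    f 0 = k' ∧ f (Fin.last (n + 1)) = k ∧ col (Fin.last n) = b

/-- The vertex set of the b-portion (red-portion if b = true) of k in G(v₁,v₂). -/
def Portion (p : ℤ → ℝ) (v1 v2 : ℝ) (b : Bool) (k : ℤ) : Set ℤ :=
  {k' | ConnTo p v1 v2 b k' k}

/-- The b-portion of k contains no two-colored cycle and has finitely many vertices. -/
def PortionGood (p : ℤ → ℝ) (v1 v2 : ℝ) (b : Bool) (k : ℤ) : Prop :=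
  (Portion p v1 v2 b k).Finite ∧ ¬ TwoColCycleIn p v1 v2 (Portion p v1 v2 b k)

/-- The vertex set of the reduced graph G̃(v₁,v₂): vertices of G(v₁,v₂) whose
red-portion or blue-portion contains no two-colored cycle and is finite are removed. -/
def ReducedV (p : ℤ → ℝ) (v1 v2 : ℝ) : Set ℤ :=
  (PiV p v1 ∪ PiV p v2) \
    {k | PortionGood p v1 v2 true k ∨ PortionGood p v1 v2 false k}

/-- There is a two-colored two-way infinite path of G(v₁,v₂) with all vertices in S. -/
def TwoColInfPathIn (p : ℤ → ℝ) (v1 v2 : ℝ) (S : Set ℤ) : Prop :=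
  ∃ (f : ℤ → ℤ) (col : ℤ → Bool),
    Function.Injective f ∧ (∀ i, f i ∈ S) ∧
    (∀ i, cedge p v1 v2 (col i) (f i) (f (i + 1))) ∧
    ∃ i j, col i ≠ col j


/-! Equality of `λ(v)` is transitive, so two consecutive edges of the same color can be
shortcut by one edge of that color. Shortcutting a two-colored cycle or two-way infinite path
as long as possible gives an alternating one: for a path this uses (H1), which rules out infinite
monochromatic rays; for a cycle it uses `v₁ ≠ v₂`, which rules out two vertices joined in both
colors, so the shortcutting stops before length two. In an alternating path or cycle every vertex
is reached along it from both sides, once through a red and once through a blue last edge, so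
both of its portions are infinite, respectively contain the whole two-colored cycle; hence no
vertex is removed by the reduction. -/

open Function Set

lemma Bool.forall_of_ne {P : Bool → Prop} {a c : Bool} (hac : a ≠ c) (ha : P a) (hc : P c) :
    ∀ b, P b := by
  intro b
  cases a <;> cases c <;> cases b <;> simp_all

lemma Int.exists_strictMono_range_eq {S : Set ℤ} (hup : ¬ BddAbove S) (hdown : ¬ BddBelow S) :
    ∃ g : ℤ → ℤ, StrictMono g ∧ Set.range g = S := by
  classical
  rw [not_bddAbove_iff] at hup
  rw [not_bddBelow_iff] at hdown
  have : Nonempty S := let ⟨c, hc, _⟩ := hup 0; ⟨⟨c, hc⟩⟩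
  have : NoMaxOrder S := ⟨fun c => let ⟨d, hd, hcd⟩ := hup c; ⟨⟨d, hd⟩, hcd⟩⟩
  have : NoMinOrder S := ⟨fun c => let ⟨d, hd, hcd⟩ := hdown c; ⟨⟨d, hd⟩, hcd⟩⟩
  let _ := LinearLocallyFiniteOrder.succOrder S
  let _ := LinearLocallyFiniteOrder.predOrder S
  let e : S ≃o ℤ := orderIsoIntOfLinearSuccPredArch
  refine ⟨fun k => e.symm k, fun a b hab => e.symm.strictMono hab, ?_⟩
  ext c
  exact ⟨fun ⟨k, hk⟩ => hk ▸ (e.symm k).2, fun hc => ⟨e ⟨c, hc⟩, by simp⟩⟩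

lemma ZMod.natCast_injOn_Iio (N : ℕ) : InjOn (Nat.cast : ℕ → ZMod N) (Iio N) := by
  intro a ha b hb hab
  rwa [ZMod.natCast_eq_natCast_iff', Nat.mod_eq_of_lt ha, Nat.mod_eq_of_lt hb] at hab

lemma ZMod.exists_embedding_skip (n : ℕ) (j : ZMod (n + 3)) :
    ∃ φ : ZMod (n + 2) → ZMod (n + 3), Injective φ ∧ φ (-1) = j ∧ φ 0 = j + 2 ∧
      (∀ y, y ≠ -1 → φ (y + 1) = φ y + 1) ∧ ∀ x, x ≠ j + 1 → x ∈ Set.range φ := by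
  have hval : ∀ y : ZMod (n + 2), y.val < n + 3 := fun y => (ZMod.val_lt y).trans (by omega)
  have hneg : (-1 : ZMod (n + 2)).val = n + 1 := ZMod.val_neg_one (n + 1)
  have hzero : ((n + 3 : ℕ) : ZMod (n + 3)) = 0 := ZMod.natCast_self _
  refine ⟨fun y => j + 2 + (y.val : ZMod (n + 3)), fun y y' h => ?_, ?_, by simp, fun y hy => ?_,
    fun x hx => ?_⟩
  · exact ZMod.val_injective _ (ZMod.natCast_injOn_Iio _ (hval y) (hval y') (add_left_cancel h))
  · simp only [hneg]
    push_cast at hzero ⊢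
    linear_combination hzero
  · have hy' : y.val ≠ n + 1 := fun h => hy (ZMod.val_injective _ (h.trans hneg.symm))
    have : (y + 1).val = y.val + 1 := by
      have := ZMod.val_lt y
      rw [ZMod.val_add, ZMod.val_one'' (by omega), Nat.mod_eq_of_lt (by omega)]
    simp only [this]
    push_cast
    ring
  · have hx' : (x - (j + 2)).val ≠ n + 2 := fun h => hx <| by
      have := ZMod.natCast_zmod_val (x - (j + 2))
      rw [h] at this
      push_cast at this hzero
      linear_combination hzero - this
    have hlt : (x - (j + 2)).val < n + 2 := by have := ZMod.val_lt (x - (j + 2)); omega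
    refine ⟨((x - (j + 2)).val : ZMod (n + 2)), ?_⟩
    simp only [ZMod.val_cast_of_lt hlt, ZMod.natCast_zmod_val]
    ring

def IsColoredWalk {ι : Type*} [Add ι] [One ι] (p : ℤ → ℝ) (v1 v2 : ℝ) (f : ι → ℤ)
    (col : ι → Bool) : Prop :=
  ∀ i, cedge p v1 v2 (col i) (f i) (f (i + 1))

section ColoredGraph

variable {p : ℤ → ℝ} {v1 v2 : ℝ}

lemma cedge_symm {b : Bool} {k₁ k₂ : ℤ} (h : cedge p v1 v2 b k₁ k₂) : cedge p v1 v2 b k₂ k₁ :=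
  ⟨h.1.symm, h.2.symm⟩

lemma cedge_trans {b : Bool} {k₁ k₂ k₃ : ℤ} (h₁₂ : cedge p v1 v2 b k₁ k₂)
    (h₂₃ : cedge p v1 v2 b k₂ k₃) (h₁₃ : k₁ ≠ k₃) : cedge p v1 v2 b k₁ k₃ :=
  ⟨h₁₃, h₁₂.2.trans h₂₃.2⟩

/-- `λ_{k₁}(v) - λ_{k₂}(v)` is affine in `v` with slope `k₂ - k₁`, so it vanishes at most once. -/
lemma eq_of_lamk_eq_of_lamk_eq {k₁ k₂ : ℤ} {v w : ℝ} (hk : k₁ ≠ k₂)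
    (hv : lamk p v k₁ = lamk p v k₂) (hw : lamk p w k₁ = lamk p w k₂) : v = w := by
  have hk' : (k₁ - k₂ : ℝ) ≠ 0 := sub_ne_zero.mpr (by exact_mod_cast hk)
  unfold lamk at hv hw
  exact mul_left_cancel₀ hk' (by linear_combination hw - hv)

lemma cedge_color_unique (hv : v1 ≠ v2) {b b' : Bool} {k₁ k₂ : ℤ}
    (h : cedge p v1 v2 b k₁ k₂) (h' : cedge p v1 v2 b' k₁ k₂) : b = b' := by
  cases b <;> cases b'
  all_goals first
    | rfl
    | exact absurd (eq_of_lamk_eq_of_lamk_eq h.1 h.2 h'.2) (by simpa [eq_comm] using hv)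

lemma mem_piV_of_cedge {b : Bool} {k k' : ℤ} (h : cedge p v1 v2 b k k') :
    k ∈ PiV p v1 ∪ PiV p v2 := by
  cases b
  · exact Or.inr ⟨k', h.1.symm, h.2⟩
  · exact Or.inl ⟨k', h.1.symm, h.2⟩

lemma TwoColInfPathIn.mono {S T : Set ℤ} (h : TwoColInfPathIn p v1 v2 S) (hST : S ⊆ T) :
    TwoColInfPathIn p v1 v2 T :=
  let ⟨f, col, hinj, hS, hwalk, htwo⟩ := h
  ⟨f, col, hinj, fun i => hST (hS i), hwalk, htwo⟩

lemma TwoColCycleIn.mono {S T : Set ℤ} (h : TwoColCycleIn p v1 v2 S) (hST : S ⊆ T) :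
    TwoColCycleIn p v1 v2 T :=
  let ⟨n, f, col, hinj, hS, hwalk, htwo⟩ := h
  ⟨n, f, col, hinj, fun i => hST (hS i), hwalk, htwo⟩

lemma mem_reducedV_of_not_portionGood {k : ℤ} (hk : k ∈ PiV p v1 ∪ PiV p v2)
    (h : ∀ b, ¬ PortionGood p v1 v2 b k) : k ∈ ReducedV p v1 v2 :=
  ⟨hk, fun hgood => hgood.elim (h true) (h false)⟩

lemma connTo_of_injOn {g : ℕ → ℤ} {c : ℕ → Bool} {d : ℕ} (hinj : InjOn g (Iic (d + 1)))
    (hwalk : ∀ t ≤ d, cedge p v1 v2 (c t) (g t) (g (t + 1))) :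
    ConnTo p v1 v2 (c d) (g 0) (g (d + 1)) := by
  refine Or.inr ⟨d, fun t => g t, fun t => c t, fun a b hab => ?_, fun t => ?_, rfl, ?_, ?_⟩
  · exact Fin.ext (hinj (mem_Iic.2 (by omega)) (mem_Iic.2 (by omega)) hab)
  · exact hwalk t (by omega)
  · simp
  · simp

section Walks

variable {ι : Type*} [AddCommGroupWithOne ι] {f : ι → ℤ} {col : ι → Bool} {d : ℕ}

lemma connTo_sub_of_isColoredWalk (hinj : Injective f) (hwalk : IsColoredWalk p v1 v2 f col)
    (hcast : InjOn (Nat.cast : ℕ → ι) (Iic (d + 1))) (i : ι) :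
    ConnTo p v1 v2 (col (i - 1)) (f (i - (d + 1 : ℕ))) (f i) := by
  have h := connTo_of_injOn (p := p) (v1 := v1) (v2 := v2) (d := d)
    (g := fun t => f (i - (d + 1 : ℕ) + t)) (c := fun t => col (i - (d + 1 : ℕ) + t))
    (fun a ha b hb hab => hcast ha hb (add_left_cancel (hinj hab)))
    (fun t _ => by simpa [add_assoc] using hwalk (i - (d + 1 : ℕ) + t))
  convert h using 2 <;> push_cast <;> abel

lemma connTo_add_of_isColoredWalk (hinj : Injective f) (hwalk : IsColoredWalk p v1 v2 f col)
    (hcast : InjOn (Nat.cast : ℕ → ι) (Iic (d + 1))) (i : ι) :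
    ConnTo p v1 v2 (col i) (f (i + (d + 1 : ℕ))) (f i) := by
  have h := connTo_of_injOn (p := p) (v1 := v1) (v2 := v2) (d := d)
    (g := fun t => f (i + (d + 1 : ℕ) - t)) (c := fun t => col (i + d - t))
    (fun a ha b hb hab => hcast ha hb (sub_right_injective (hinj hab)))
    (fun t _ => by
      convert cedge_symm (hwalk (i + d - t)) using 2 <;> push_cast <;> abel)
  convert h using 2 <;> push_cast <;> abel

end Walks

section Paths

variable {f : ℤ → ℤ} {col : ℤ → Bool}

lemma image_Iio_subset_portion (hinj : Injective f) (hwalk : IsColoredWalk p v1 v2 f col)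
    (i : ℤ) : f '' Iio i ⊆ Portion p v1 v2 (col (i - 1)) (f i) := by
  rintro _ ⟨j, hj, rfl⟩
  obtain ⟨d, rfl⟩ : ∃ d : ℕ, j = i - (d + 1 : ℕ) := ⟨(i - j - 1).toNat, by simp at hj; omega⟩
  exact connTo_sub_of_isColoredWalk hinj hwalk Nat.cast_injective.injOn i

lemma image_Ioi_subset_portion (hinj : Injective f) (hwalk : IsColoredWalk p v1 v2 f col)
    (i : ℤ) : f '' Ioi i ⊆ Portion p v1 v2 (col i) (f i) := by
  rintro _ ⟨j, hj, rfl⟩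
  obtain ⟨d, rfl⟩ : ∃ d : ℕ, j = i + (d + 1 : ℕ) := ⟨(j - i - 1).toNat, by simp at hj; omega⟩
  exact connTo_add_of_isColoredWalk hinj hwalk Nat.cast_injective.injOn i

lemma mem_reducedV_of_color_change (hinj : Injective f) (hwalk : IsColoredWalk p v1 v2 f col)
    {i : ℤ} (hi : col (i - 1) ≠ col i) : f i ∈ ReducedV p v1 v2 := by
  refine mem_reducedV_of_not_portionGood (mem_piV_of_cedge (hwalk i))
    (Bool.forall_of_ne hi (fun hgood => ?_) (fun hgood => ?_))
  · exact ((Iio_infinite i).image hinj.injOn).mono (image_Iio_subset_portion hinj hwalk i) hgood.1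
  · exact ((Ioi_infinite i).image hinj.injOn).mono (image_Ioi_subset_portion hinj hwalk i) hgood.1

lemma twoColInfPathIn_reducedV_of_alternating (hinj : Injective f)
    (hwalk : IsColoredWalk p v1 v2 f col) (halt : ∀ i, col i ≠ col (i + 1)) :
    TwoColInfPathIn p v1 v2 (ReducedV p v1 v2) :=
  ⟨f, col, hinj, fun i => mem_reducedV_of_color_change hinj hwalk (by simpa using halt (i - 1)),
    hwalk, 0, 1, halt 0⟩

lemma cedge_of_monochromatic (hinj : Injective f) (hwalk : IsColoredWalk p v1 v2 f col)
    {a b : ℤ} (hab : a ≤ b) (hrun : ∀ c, a ≤ c → c < b → col c = col (c + 1)) :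
    col b = col a ∧ cedge p v1 v2 (col a) (f a) (f (b + 1)) := by
  induction b, hab using Int.leInduction with
  | base => exact ⟨rfl, hwalk a⟩
  | succ b hab ih =>
    obtain ⟨hcol, hedge⟩ := ih fun c h₁ h₂ => hrun c h₁ (by omega)
    have hcol' : col (b + 1) = col a := (hrun b hab (by omega)).symm.trans hcol
    refine ⟨hcol', cedge_trans hedge (hcol' ▸ hwalk (b + 1)) (hinj.ne (by omega))⟩

lemma colorChanges_not_bddAbove (hH1 : hypH1 p) (hinj : Injective f)
    (hwalk : IsColoredWalk p v1 v2 f col) : ¬ BddAbove {c | col c ≠ col (c + 1)} := by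
  rintro ⟨i, hi⟩
  have hrun : ∀ c, i < c → col c = col (c + 1) := fun c hc => by
    by_contra h
    exact absurd (hi h) (not_le.2 hc)
  refine Set.infinite_of_injective_forall_mem (f := fun t : ℕ => f (i + 1 + t + 1))
    (fun s t hst => by simpa using hinj hst) (fun t => ?_)
    (hH1 (if col (i + 1) then v1 else v2) (f (i + 1)))
  exact ((cedge_of_monochromatic hinj hwalk (by omega : i + 1 ≤ i + 1 + t)
    fun c hc _ => hrun c (by omega)).2.2).symm

lemma colorChanges_not_bddBelow (hH1 : hypH1 p) (hinj : Injective f)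
    (hwalk : IsColoredWalk p v1 v2 f col) : ¬ BddBelow {c | col c ≠ col (c + 1)} := by
  rintro ⟨i, hi⟩
  have hrun : ∀ c, c < i → col c = col (c + 1) := fun c hc => by
    by_contra h
    exact absurd (hi h) (not_le.2 hc)
  refine Set.infinite_of_injective_forall_mem (f := fun t : ℕ => f (i - 1 - t))
    (fun s t hst => by simpa using hinj hst) (fun t => ?_)
    (hH1 (if col (i - 1) then v1 else v2) (f i))
  obtain ⟨hcol, hedge⟩ := cedge_of_monochromatic hinj hwalk (by omega : i - 1 - t ≤ i - 1)
    fun c _ hc => hrun c (by omega)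
  simp only [sub_add_cancel, ← hcol] at hedge
  exact hedge.2

lemma exists_alternating_path (hH1 : hypH1 p) (hinj : Injective f)
    (hwalk : IsColoredWalk p v1 v2 f col) :
    ∃ (F : ℤ → ℤ) (COL : ℤ → Bool), Injective F ∧ IsColoredWalk p v1 v2 F COL ∧
      ∀ k, COL k ≠ COL (k + 1) := by
  obtain ⟨g, hg, hrange⟩ := Int.exists_strictMono_range_eq
    (colorChanges_not_bddAbove hH1 hinj hwalk) (colorChanges_not_bddBelow hH1 hinj hwalk)
  have hchange : ∀ k, col (g k) ≠ col (g k + 1) := fun k => hrange.subset (mem_range_self k)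
  have hgap : ∀ k c, g k < c → c < g (k + 1) → col c = col (c + 1) := by
    intro k c h₁ h₂
    by_contra h
    obtain ⟨m, rfl⟩ := hrange.symm.subset h
    have := hg.lt_iff_lt.1 h₁
    have := hg.lt_iff_lt.1 h₂
    omega
  have hrun : ∀ k, col (g (k + 1)) = col (g k + 1) ∧
      cedge p v1 v2 (col (g k + 1)) (f (g k + 1)) (f (g (k + 1) + 1)) := fun k =>
    cedge_of_monochromatic hinj hwalk (hg (lt_add_one k))
      fun c h₁ h₂ => hgap k c (by omega) h₂
  exact ⟨fun k => f (g k + 1), fun k => col (g k + 1),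
    hinj.comp ((add_left_injective 1).comp hg.injective), fun k => (hrun k).2,
    fun k h => hchange (k + 1) ((hrun k).1.trans h)⟩

end Paths

section Cycles

lemma range_subset_portion_sub {N : ℕ} [NeZero N] {f : ZMod N → ℤ} {col : ZMod N → Bool}
    (hinj : Injective f) (hwalk : IsColoredWalk p v1 v2 f col) (i : ZMod N) :
    range f ⊆ Portion p v1 v2 (col (i - 1)) (f i) := by
  rintro _ ⟨j, rfl⟩
  rcases eq_or_ne j i with rfl | hji
  · exact Or.inl rfl
  obtain ⟨d, hd⟩ :=
    Nat.exists_eq_add_one_of_ne_zero ((ZMod.val_ne_zero _).2 (sub_ne_zero.2 hji.symm))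
  have hdN : d + 1 < N := hd ▸ ZMod.val_lt (i - j)
  have := connTo_sub_of_isColoredWalk hinj hwalk
    ((ZMod.natCast_injOn_Iio N).mono fun t ht => (mem_Iic.1 ht).trans_lt hdN) i
  rwa [← hd, ZMod.natCast_zmod_val, sub_sub_cancel] at this

lemma range_subset_portion_add {N : ℕ} [NeZero N] {f : ZMod N → ℤ} {col : ZMod N → Bool}
    (hinj : Injective f) (hwalk : IsColoredWalk p v1 v2 f col) (i : ZMod N) :
    range f ⊆ Portion p v1 v2 (col i) (f i) := by
  rintro _ ⟨j, rfl⟩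
  rcases eq_or_ne j i with rfl | hji
  · exact Or.inl rfl
  obtain ⟨d, hd⟩ :=
    Nat.exists_eq_add_one_of_ne_zero ((ZMod.val_ne_zero _).2 (sub_ne_zero.2 hji))
  have hdN : d + 1 < N := hd ▸ ZMod.val_lt (j - i)
  have := connTo_add_of_isColoredWalk hinj hwalk
    ((ZMod.natCast_injOn_Iio N).mono fun t ht => (mem_Iic.1 ht).trans_lt hdN) i
  rwa [← hd, ZMod.natCast_zmod_val, add_sub_cancel] at this

section

variable {n : ℕ} {f : ZMod (n + 3) → ℤ} {col : ZMod (n + 3) → Bool}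

lemma mem_reducedV_of_cycle_color_change (hinj : Injective f)
    (hwalk : IsColoredWalk p v1 v2 f col) (htwo : ∃ a b, col a ≠ col b) {i : ZMod (n + 3)}
    (hi : col (i - 1) ≠ col i) : f i ∈ ReducedV p v1 v2 := by
  refine mem_reducedV_of_not_portionGood (mem_piV_of_cedge (hwalk i))
    (Bool.forall_of_ne hi (fun hgood => hgood.2 ?_) (fun hgood => hgood.2 ?_))
  · exact ⟨n, f, col, hinj, fun j => range_subset_portion_sub hinj hwalk i ⟨j, rfl⟩, hwalk, htwo⟩
  · exact ⟨n, f, col, hinj, fun j => range_subset_portion_add hinj hwalk i ⟨j, rfl⟩, hwalk, htwo⟩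

lemma twoColCycleIn_reducedV_of_alternating (hinj : Injective f)
    (hwalk : IsColoredWalk p v1 v2 f col) (halt : ∀ i, col i ≠ col (i + 1)) :
    TwoColCycleIn p v1 v2 (ReducedV p v1 v2) :=
  ⟨n, f, col, hinj,
    fun i => mem_reducedV_of_cycle_color_change hinj hwalk ⟨0, 1, by simpa using halt 0⟩
      (by simpa using halt (i - 1)),
    hwalk, 0, 1, by simpa using halt 0⟩

lemma exists_shorter_cycle (hinj : Injective f) (hwalk : IsColoredWalk p v1 v2 f col)
    {j : ZMod (n + 3)} (hj : col j = col (j + 1)) :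
    ∃ (F : ZMod (n + 2) → ℤ) (COL : ZMod (n + 2) → Bool), Injective F ∧
      IsColoredWalk p v1 v2 F COL ∧ ∀ x, ∃ y, COL y = col x := by
  obtain ⟨φ, hφinj, hφlast, hφzero, hφsucc, hφrange⟩ := ZMod.exists_embedding_skip n j
  refine ⟨f ∘ φ, col ∘ φ, hinj.comp hφinj, fun y => ?_, fun x => ?_⟩
  · rcases eq_or_ne y (-1) with rfl | hy
    · have hne : f j ≠ f (j + 2) := hinj.ne fun h => by
        have := congrArg ZMod.val (hφinj (hφlast.trans (h.trans hφzero.symm)))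
        rw [ZMod.val_neg_one (n + 1), ZMod.val_zero] at this
        omega
      have h2 := hwalk (j + 1)
      rw [← hj, add_assoc, one_add_one_eq_two] at h2
      simpa [hφlast, hφzero] using cedge_trans (hwalk j) h2 hne
    · simpa [hφsucc y hy] using hwalk (φ y)
  · rcases eq_or_ne x (j + 1) with rfl | hx
    · exact ⟨-1, by simp [hφlast, hj]⟩
    · obtain ⟨y, rfl⟩ := hφrange x hx
      exact ⟨y, rfl⟩

end

lemma not_twoColored_of_zmod_two (hv : v1 ≠ v2) {f : ZMod 2 → ℤ} {col : ZMod 2 → Bool}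
    (hwalk : IsColoredWalk p v1 v2 f col) : ¬ ∃ a b, col a ≠ col b := by
  have h1 := hwalk 1
  rw [show (1 + 1 : ZMod 2) = 0 from rfl] at h1
  have h01 : col 0 = col 1 := cedge_color_unique hv (hwalk 0) (cedge_symm h1)
  rintro ⟨a, b, hab⟩
  fin_cases a <;> fin_cases b
  all_goals first | exact hab rfl | exact hab h01 | exact hab h01.symm

lemma exists_alternating_cycle (hv : v1 ≠ v2) (n : ℕ) :
    ∀ (f : ZMod (n + 3) → ℤ) (col : ZMod (n + 3) → Bool), Injective f →
      IsColoredWalk p v1 v2 f col → (∃ a b, col a ≠ col b) →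
      ∃ (m : ℕ) (F : ZMod (m + 3) → ℤ) (COL : ZMod (m + 3) → Bool), Injective F ∧
        IsColoredWalk p v1 v2 F COL ∧ ∀ x, COL x ≠ COL (x + 1) := by
  induction n using Nat.strong_induction_on with
  | _ n ih =>
    intro f col hinj hwalk htwo
    by_cases halt : ∀ x, col x ≠ col (x + 1)
    · exact ⟨n, f, col, hinj, hwalk, halt⟩
    push Not at halt
    obtain ⟨j, hj⟩ := halt
    obtain ⟨F, COL, hFinj, hFwalk, hFcol⟩ := exists_shorter_cycle hinj hwalk hj
    have hFtwo : ∃ a b, COL a ≠ COL b :=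
      let ⟨a, b, hab⟩ := htwo
      let ⟨a', ha'⟩ := hFcol a
      let ⟨b', hb'⟩ := hFcol b
      ⟨a', b', ha' ▸ hb' ▸ hab⟩
    cases n with
    | zero => exact absurd hFtwo (not_twoColored_of_zmod_two hv hFwalk)
    | succ m => exact ih m (by omega) F COL hFinj hFwalk hFtwo

end Cycles

end ColoredGraph

theorem stmt_10_general (p : ℤ → ℝ) (hH1 : hypH1 p) (v1 v2 : ℝ) (hv : v1 ≠ v2) :
    (TwoColInfPathIn p v1 v2 (ReducedV p v1 v2) ↔ TwoColInfPathIn p v1 v2 Set.univ) ∧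
    (TwoColCycleIn p v1 v2 (ReducedV p v1 v2) ↔ TwoColCycleIn p v1 v2 Set.univ) := by
  refine ⟨⟨fun h => h.mono (subset_univ _), ?_⟩, ⟨fun h => h.mono (subset_univ _), ?_⟩⟩
  · rintro ⟨f, col, hinj, -, hwalk, -⟩
    obtain ⟨F, COL, hFinj, hFwalk, hFalt⟩ := exists_alternating_path hH1 hinj hwalk
    exact twoColInfPathIn_reducedV_of_alternating hFinj hFwalk hFalt
  · rintro ⟨n, f, col, hinj, -, hwalk, htwo⟩
    obtain ⟨m, F, COL, hFinj, hFwalk, hFalt⟩ := exists_alternating_cycle hv n f col hinj hwalk htwo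
    exact twoColCycleIn_reducedV_of_alternating hFinj hFwalk hFalt

/-- G̃(v₁,v₂) contains a two-colored two-way infinite path (resp. two-colored cycle)
iff G(v₁,v₂) does. -/
theorem stmt_10 (p : ℤ → ℝ) (hH1 : hypH1 p) (hH2 : hypH2 p) (v1 v2 : ℝ) (hv : v1 ≠ v2) :
    (TwoColInfPathIn p v1 v2 (ReducedV p v1 v2) ↔ TwoColInfPathIn p v1 v2 Set.univ) ∧
    (TwoColCycleIn p v1 v2 (ReducedV p v1 v2) ↔ TwoColCycleIn p v1 v2 Set.univ) :=
  stmt_10_general p hH1 v1 v2 hv
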